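/- arXiv:2010.13743 — 2 statements merged into one kernel-verified Lean document; each statement's English description precedes it below -/
import Mathlib

section
/- Pełczyński decomposition method: Let B, M, X, Y be complex Banach spaces such that B is isomorphic (via a continuous linear equivalence) to the direct sum M ⊕ X, and M is isomorphic to the direct sum B ⊕ Y. If moreover B is isomorphic to ℓ∞(B), then M is isomorphic to B. -/
open scoped ENNReal


noncomputable section PelAux

variable {A C : Type*}
  [NormedAddCommGroup A] [NormedSpace ℂ A]
  [NormedAddCommGroup C] [NormedSpace ℂ C]

/-- Postcomposition by a continuous linear map, on `ℓ∞` sequences. -/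
def pelLpMap (T : A →L[ℂ] C) :
    lp (fun _ : ℕ => A) ∞ →L[ℂ] lp (fun _ : ℕ => C) ∞ := by
  refine LinearMap.mkContinuous
    { toFun := fun f => ⟨fun n => T (f n), ?_⟩
      map_add' := ?_
      map_smul' := ?_ } ‖T‖ ?_
  · refine memℓp_infty ⟨‖T‖ * ‖f‖, ?_⟩
    rintro - ⟨n, rfl⟩
    calc ‖T (f n)‖ ≤ ‖T‖ * ‖f n‖ := T.le_opNorm _
      _ ≤ ‖T‖ * ‖f‖ := by
          gcongr
          exact lp.norm_apply_le_norm (by norm_num) f n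
  · intro f g; apply lp.ext; funext n; simp [lp.coeFn_add]; rfl
  · intro c f; apply lp.ext; funext n; simp [lp.coeFn_smul]
  · intro f
    refine lp.norm_le_of_forall_le (by positivity) fun n => ?_
    calc ‖T (f n)‖ ≤ ‖T‖ * ‖f n‖ := T.le_opNorm _
      _ ≤ ‖T‖ * ‖f‖ := by
          gcongr
          exact lp.norm_apply_le_norm (by norm_num) f n

@[simp] lemma pelLpMap_apply (T : A →L[ℂ] C) (f : lp (fun _ : ℕ => A) ∞) (n : ℕ) :
    (pelLpMap T f : ∀ _ : ℕ, C) n = T (f n) := rfl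

/-- `ℓ∞` congruence. -/
def pelLpCongr (e : A ≃L[ℂ] C) :
    lp (fun _ : ℕ => A) ∞ ≃L[ℂ] lp (fun _ : ℕ => C) ∞ :=
  ContinuousLinearEquiv.equivOfInverse (pelLpMap (e : A →L[ℂ] C))
    (pelLpMap (e.symm : C →L[ℂ] A))
    (fun f => by apply lp.ext; funext n; simp)
    (fun f => by apply lp.ext; funext n; simp)

end PelAux

noncomputable section PelAux2

variable {A C : Type*}
  [NormedAddCommGroup A] [NormedSpace ℂ A]
  [NormedAddCommGroup C] [NormedSpace ℂ C]

/-- `ℓ∞(A × C) ≃ ℓ∞(A) × ℓ∞(C)`. -/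
def pelLpSplit :
    lp (fun _ : ℕ => A × C) ∞ ≃L[ℂ] (lp (fun _ : ℕ => A) ∞) × (lp (fun _ : ℕ => C) ∞) := by
  have memA : ∀ f : lp (fun _ : ℕ => A × C) ∞, Memℓp (fun n => (f n).1) ∞ := by
    intro f
    refine memℓp_infty ⟨‖f‖, ?_⟩
    rintro - ⟨n, rfl⟩
    exact (norm_fst_le (f n)).trans (lp.norm_apply_le_norm (by norm_num) f n)
  have memC : ∀ f : lp (fun _ : ℕ => A × C) ∞, Memℓp (fun n => (f n).2) ∞ := by
    intro f
    refine memℓp_infty ⟨‖f‖, ?_⟩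
    rintro - ⟨n, rfl⟩
    exact (norm_snd_le (f n)).trans (lp.norm_apply_le_norm (by norm_num) f n)
  have memP : ∀ (g : lp (fun _ : ℕ => A) ∞) (h : lp (fun _ : ℕ => C) ∞),
      Memℓp (fun n => ((g n : A), (h n : C))) ∞ := by
    intro g h
    refine memℓp_infty ⟨max ‖g‖ ‖h‖, ?_⟩
    rintro - ⟨n, rfl⟩
    exact max_le_max (lp.norm_apply_le_norm (by norm_num) g n)
      (lp.norm_apply_le_norm (by norm_num) h n)
  refine ContinuousLinearEquiv.equivOfInverse
    (LinearMap.mkContinuous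
      { toFun := fun f => (⟨fun n => (f n).1, memA f⟩, ⟨fun n => (f n).2, memC f⟩)
        map_add' := by
          intro f g
          refine Prod.ext (lp.ext (funext fun n => ?_)) (lp.ext (funext fun n => ?_)) <;>
            simp [lp.coeFn_add] <;> rfl
        map_smul' := by
          intro c f
          refine Prod.ext (lp.ext (funext fun n => ?_)) (lp.ext (funext fun n => ?_)) <;>
            simp [lp.coeFn_smul] } 1 ?_)
    (LinearMap.mkContinuous
      { toFun := fun p => ⟨fun n => ((p.1 n : A), (p.2 n : C)), memP p.1 p.2⟩
        map_add' := by
          intro f g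
          refine lp.ext (funext fun n => ?_)
          simp [lp.coeFn_add, Prod.add_def] <;> rfl
        map_smul' := by
          intro c f
          refine lp.ext (funext fun n => ?_)
          simp [lp.coeFn_smul, Prod.smul_def] } 1 ?_)
    ?_ ?_
  · intro f
    rw [one_mul, Prod.norm_def]
    refine max_le ?_ ?_ <;>
      refine lp.norm_le_of_forall_le (norm_nonneg f) fun n => ?_
    · exact (norm_fst_le (f n)).trans (lp.norm_apply_le_norm (by norm_num) f n)
    · exact (norm_snd_le (f n)).trans (lp.norm_apply_le_norm (by norm_num) f n)
  · intro p
    rw [one_mul]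
    refine lp.norm_le_of_forall_le (norm_nonneg p) fun n => ?_
    rw [Prod.norm_def]
    exact max_le ((lp.norm_apply_le_norm (by norm_num) p.1 n).trans (le_max_left _ _))
      ((lp.norm_apply_le_norm (by norm_num) p.2 n).trans (le_max_right _ _))
  · intro f
    exact lp.ext (funext fun n => rfl)
  · intro p
    exact Prod.ext (lp.ext (funext fun n => rfl)) (lp.ext (funext fun n => rfl))

/-- Splitting off the head: `ℓ∞(A) ≃ A × ℓ∞(A)`. -/
def pelLpCons : lp (fun _ : ℕ => A) ∞ ≃L[ℂ] A × lp (fun _ : ℕ => A) ∞ := by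
  have memTail : ∀ f : lp (fun _ : ℕ => A) ∞, Memℓp (fun n => f (n + 1)) ∞ := by
    intro f
    refine memℓp_infty ⟨‖f‖, ?_⟩
    rintro - ⟨n, rfl⟩
    exact lp.norm_apply_le_norm (by norm_num) f (n + 1)
  have memCons : ∀ (a : A) (g : lp (fun _ : ℕ => A) ∞),
      (fun n => (Nat.casesOn n a fun k => g k : A)) ∈ lp (fun _ : ℕ => A) ∞ := by
    intro a g
    refine memℓp_infty ⟨max ‖a‖ ‖g‖, ?_⟩
    rintro - ⟨n, rfl⟩
    cases n with
    | zero => exact le_max_left _ _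
    | succ k => exact (lp.norm_apply_le_norm (by norm_num) g k).trans (le_max_right _ _)
  refine ContinuousLinearEquiv.equivOfInverse
    (LinearMap.mkContinuous
      { toFun := fun f => ((f 0 : A), ⟨fun n => f (n + 1), memTail f⟩)
        map_add' := by
          intro f g
          refine Prod.ext rfl (lp.ext (funext fun n => ?_))
          simp [lp.coeFn_add] <;> rfl
        map_smul' := by
          intro c f
          refine Prod.ext rfl (lp.ext (funext fun n => ?_))
          simp [lp.coeFn_smul] } 1 ?_)
    (LinearMap.mkContinuous
      { toFun := fun p => ⟨fun n => (Nat.casesOn n p.1 fun k => p.2 k : A), memCons p.1 p.2⟩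
        map_add' := by
          intro p q
          refine lp.ext (funext fun n => ?_)
          cases n <;> rfl
        map_smul' := by
          intro c p
          refine lp.ext (funext fun n => ?_)
          cases n <;> rfl } 1 ?_)
    ?_ ?_
  · intro f
    rw [one_mul, Prod.norm_def]
    refine max_le (lp.norm_apply_le_norm (by norm_num) f 0) ?_
    exact lp.norm_le_of_forall_le (norm_nonneg f) fun n =>
      lp.norm_apply_le_norm (by norm_num) f (n + 1)
  · intro p
    rw [one_mul]
    refine lp.norm_le_of_forall_le (norm_nonneg p) fun n => ?_
    rw [Prod.norm_def]
    cases n with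
    | zero => exact le_max_left _ _
    | succ k => exact (lp.norm_apply_le_norm (by norm_num) p.2 k).trans (le_max_right _ _)
  · intro f
    refine lp.ext (funext fun n => ?_)
    cases n <;> rfl
  · intro p
    exact Prod.ext rfl (lp.ext (funext fun n => rfl))

end PelAux2

/-- **Pełczyński decomposition method.** If `B ≅ M × X`, `M ≅ B × Y` and
`B ≅ ℓ∞(B)` (as complex Banach spaces, via continuous linear equivalences),
then `M ≅ B`. -/
theorem pelczynski_decomposition
    (B M X Y : Type*)
    [NormedAddCommGroup B] [NormedSpace ℂ B] [CompleteSpace B]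
    [NormedAddCommGroup M] [NormedSpace ℂ M] [CompleteSpace M]
    [NormedAddCommGroup X] [NormedSpace ℂ X] [CompleteSpace X]
    [NormedAddCommGroup Y] [NormedSpace ℂ Y] [CompleteSpace Y]
    (h1 : Nonempty (B ≃L[ℂ] (M × X)))
    (h2 : Nonempty (M ≃L[ℂ] (B × Y)))
    (h3 : Nonempty (B ≃L[ℂ] lp (fun _ : ℕ => B) ∞)) :
    Nonempty (M ≃L[ℂ] B) := by
  obtain ⟨e1⟩ := h1
  obtain ⟨e2⟩ := h2
  obtain ⟨e3⟩ := h3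
  -- Step 1: `M ≃ B × M`.
  have step1 : M ≃L[ℂ] B × M :=
    e2.trans <| (e3.prodCongr (ContinuousLinearEquiv.refl ℂ Y)).trans <|
      (pelLpCons.prodCongr (ContinuousLinearEquiv.refl ℂ Y)).trans <|
        (LinearIsometryEquiv.prodAssoc ℂ B (lp (fun _ : ℕ => B) ∞) Y).toContinuousLinearEquiv.trans <|
          (ContinuousLinearEquiv.refl ℂ B).prodCongr <|
            (e3.symm.prodCongr (ContinuousLinearEquiv.refl ℂ Y)).trans e2.symm
  -- Step 2: `B ≃ M × B`.
  have step2 : B ≃L[ℂ] M × B :=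
    e3.trans <| (pelLpCongr e1).trans <| pelLpSplit.trans <|
      (pelLpCons.prodCongr (ContinuousLinearEquiv.refl ℂ (lp (fun _ : ℕ => X) ∞))).trans <|
        (LinearIsometryEquiv.prodAssoc ℂ M (lp (fun _ : ℕ => M) ∞)
            (lp (fun _ : ℕ => X) ∞)).toContinuousLinearEquiv.trans <|
          (ContinuousLinearEquiv.refl ℂ M).prodCongr <|
            pelLpSplit.symm.trans <| (pelLpCongr e1).symm.trans e3.symm
  exact ⟨step1.trans ((ContinuousLinearEquiv.prodComm ℂ B M).trans step2.symm)⟩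
end

section
/- The Banach space B(ℓ₂) of bounded linear operators on the complex Hilbert space ℓ₂ = ℓ₂(ℕ, ℂ), equipped with the operator norm, is isomorphic (via a continuous linear equivalence) to the Banach space ℓ∞(B(ℓ₂)) of bounded B(ℓ₂)-valued sequences with the supremum norm. -/
/-!
Pełczyński's decomposition method, with `X = B(ℓ₂)` and `Y = ℓ∞(X)`. Since `ℓ₂ ≅ ℓ₂(ℕ, ℓ₂)`, a
bounded sequence of operators acts block-diagonally on `ℓ₂`, and taking the diagonal blocks of an
operator is a left inverse of this embedding; so `X ≅ Y × Z` for some `Z`. Splitting `ℕ` into two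
infinite sets, resp. into a point and the rest, gives `Y ≅ Y × Y` and `Y ≅ Y × X`. Hence
`X ≅ Y × Z ≅ Y × Y × Z ≅ Y × X ≅ Y`.
-/

set_option synthInstance.maxHeartbeats 1000000
set_option maxHeartbeats 1000000
open scoped ENNReal

/-- The complex Hilbert space `ℓ₂ = ℓ₂(ℕ, ℂ)`. -/
noncomputable abbrev EllTwo : Type := lp (fun _ : ℕ => ℂ) 2

/-- `B(ℓ₂)`, the Banach space of bounded linear operators on `ℓ₂`, with the
operator norm. -/
noncomputable abbrev BoundedOpsOnEllTwo : Type := EllTwo →L[ℂ] EllTwo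

open Function

section Reindex

variable {𝕜 ι κ E : Type*} [NormedAddCommGroup E] {p : ℝ≥0∞}

theorem Memℓp.comp_injective {f : ι → E} (hf : Memℓp f p) {g : κ → ι} (hg : Injective g) :
    Memℓp (f ∘ g) p := by
  rcases p.trichotomy with rfl | rfl | hp
  · rw [memℓp_zero_iff] at hf ⊢
    exact hf.preimage hg.injOn
  · rw [memℓp_infty_iff] at hf ⊢
    exact hf.mono (Set.range_comp_subset_range g fun i => ‖f i‖)
  · rw [memℓp_gen_iff hp] at hf ⊢
    exact hf.comp_injective hg

variable (𝕜 E p) [NormedField 𝕜] [NormedSpace 𝕜 E] [Fact (1 ≤ p)]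

noncomputable def lpCongrLeft (e : ι ≃ κ) :
    lp (fun _ : ι => E) p ≃ₗᵢ[𝕜] lp (fun _ : κ => E) p where
  toFun f := ⟨f ∘ e.symm, (lp.memℓp f).comp_injective e.symm.injective⟩
  invFun g := ⟨g ∘ e, (lp.memℓp g).comp_injective e.injective⟩
  left_inv f := lp.ext <| funext fun i => by simp
  right_inv g := lp.ext <| funext fun k => by simp
  map_add' _ _ := rfl
  map_smul' _ _ := rfl
  norm_map' f := by
    rcases eq_or_ne p ∞ with rfl | hp
    · exact e.symm.iSup_comp (g := fun i => ‖f i‖)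
    · have hp : 0 < p.toReal := ENNReal.toReal_pos (zero_lt_one.trans_le Fact.out).ne' hp
      rw [lp.norm_eq_tsum_rpow hp, lp.norm_eq_tsum_rpow hp]
      exact congrArg (· ^ (1 / p.toReal)) (e.symm.tsum_eq fun i => ‖f i‖ ^ p.toReal)

end Reindex

section Curry

variable {𝕜 ι κ E : Type*} [NormedAddCommGroup E] {p : ℝ≥0∞}

theorem lp.hasSum_tsum_norm_rpow_prod (hp : 0 < p.toReal) (f : lp (fun _ : ι × κ => E) p) :
    HasSum (fun i => ∑' k, ‖f (i, k)‖ ^ p.toReal) (‖f‖ ^ p.toReal) :=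
  (lp.hasSum_norm hp f).prod_fiberwise fun i =>
    (((lp.memℓp f).summable hp).comp_injective (Prod.mk_right_injective i)).hasSum

variable [Fact (1 ≤ p)]

theorem memℓp_uncurry (hp : 0 < p.toReal) (g : lp (fun _ : ι => lp (fun _ : κ => E) p) p) :
    Memℓp (fun x : ι × κ => g x.1 x.2) p := by
  refine memℓp_gen ((summable_prod_of_nonneg fun _ => by positivity).2
    ⟨fun i => (lp.memℓp (g i)).summable hp, ?_⟩)
  simpa only [lp.norm_rpow_eq_tsum hp] using (lp.memℓp g).summable hp

variable (𝕜 E p) [NormedField 𝕜] [NormedSpace 𝕜 E]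

noncomputable def lpCurry (hp : p ≠ ∞) :
    lp (fun _ : ι × κ => E) p ≃ₗᵢ[𝕜] lp (fun _ : ι => lp (fun _ : κ => E) p) p :=
  have hp : 0 < p.toReal := ENNReal.toReal_pos (zero_lt_one.trans_le Fact.out).ne' hp
  { toFun f := ⟨fun i => ⟨fun k => f (i, k),
        (lp.memℓp f).comp_injective (Prod.mk_right_injective i)⟩, memℓp_gen <| by
        simpa only [lp.norm_rpow_eq_tsum hp] using (lp.hasSum_tsum_norm_rpow_prod hp f).summable⟩
    invFun g := ⟨fun x => g x.1 x.2, memℓp_uncurry hp g⟩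
    left_inv _ := rfl
    right_inv _ := rfl
    map_add' _ _ := rfl
    map_smul' _ _ := rfl
    norm_map' f := by
      refine Real.rpow_left_injOn hp.ne' (norm_nonneg _) (norm_nonneg _) ?_
      dsimp only
      rw [lp.norm_rpow_eq_tsum hp, ← (lp.hasSum_tsum_norm_rpow_prod hp f).tsum_eq]
      exact tsum_congr fun i => lp.norm_rpow_eq_tsum hp _ }

end Curry

section LInfty

variable {𝕜 E ι κ : Type*} [NormedField 𝕜] [NormedAddCommGroup E] [NormedSpace 𝕜 E]

theorem lp.norm_comp_le_infty (f : lp (fun _ : ι => E) ∞) (g : κ → ι)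
    (hfg : Memℓp (f ∘ g) ∞) : ‖(⟨f ∘ g, hfg⟩ : lp (fun _ : κ => E) ∞)‖ ≤ ‖f‖ :=
  lp.norm_le_of_forall_le (norm_nonneg f) fun k =>
    lp.norm_apply_le_norm ENNReal.top_ne_zero f (g k)

variable (𝕜 E) in
noncomputable def lpInftySumEquiv :
    lp (fun _ : ι ⊕ κ => E) ∞ ≃L[𝕜] lp (fun _ : ι => E) ∞ × lp (fun _ : κ => E) ∞ :=
  LinearEquiv.toContinuousLinearEquivOfBounds
    { toFun f := (⟨f ∘ Sum.inl, (lp.memℓp f).comp_injective Sum.inl_injective⟩,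
        ⟨f ∘ Sum.inr, (lp.memℓp f).comp_injective Sum.inr_injective⟩)
      invFun g := ⟨Sum.elim g.1 g.2, memℓp_infty <| by
        refine ((lp.memℓp g.1).bddAbove.union (lp.memℓp g.2).bddAbove).mono ?_
        rintro _ ⟨i | k, rfl⟩
        exacts [Or.inl ⟨i, rfl⟩, Or.inr ⟨k, rfl⟩]⟩
      left_inv f := lp.ext <| Sum.elim_comp_inl_inr f
      right_inv _ := rfl
      map_add' _ _ := rfl
      map_smul' _ _ := rfl } 1 1
    (fun f => by
      rw [one_mul, Prod.norm_def, max_le_iff]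
      exact ⟨lp.norm_comp_le_infty f _ _, lp.norm_comp_le_infty f _ _⟩)
    (fun g => by
      rw [one_mul, Prod.norm_def]
      refine lp.norm_le_of_forall_le (by positivity) ?_
      rintro (i | k)
      · exact (lp.norm_apply_le_norm ENNReal.top_ne_zero g.1 i).trans (le_max_left _ _)
      · exact (lp.norm_apply_le_norm ENNReal.top_ne_zero g.2 k).trans (le_max_right _ _))

end LInfty

section Unique

variable {𝕜 E ι : Type*} {p : ℝ≥0∞} [NormedField 𝕜] [NormedAddCommGroup E] [NormedSpace 𝕜 E]
  [Unique ι]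

theorem lp.single_default_apply_default (f : lp (fun _ : ι => E) p) :
    lp.single p default (f default) = f :=
  lp.ext <| funext fun i => by rw [Unique.eq_default i]; exact lp.single_apply_self ..

variable (𝕜 E ι p) [Fact (1 ≤ p)]

noncomputable def lpUniqueEquiv : lp (fun _ : ι => E) p ≃ₗᵢ[𝕜] E where
  toFun f := f default
  invFun x := lp.single p default x
  left_inv := lp.single_default_apply_default
  right_inv x := lp.single_apply_self ..
  map_add' _ _ := rfl
  map_smul' _ _ := rfl
  norm_map' f := by
    conv_rhs => rw [← lp.single_default_apply_default f]
    exact (lp.norm_single (E := fun _ : ι => E) (zero_lt_one.trans_le (Fact.out : 1 ≤ p))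
      default _).symm

end Unique

namespace lp

section BlockDiagonal

variable {𝕜 ι : Type*} {E : ι → Type*} {p : ℝ≥0∞} [NontriviallyNormedField 𝕜]
  [∀ i, NormedAddCommGroup (E i)] [∀ i, NormedSpace 𝕜 (E i)]

theorem norm_apply_apply_le_smul_toNorm (T : lp (fun i => E i →L[𝕜] E i) ∞) (x : lp E p)
    (i : ι) :
    ‖T i (x i)‖ ≤ ‖(‖T‖ • toNorm x : lp (fun _ : ι => ℝ) p) i‖ := by
  rw [coeFn_smul, Pi.smul_apply, toNorm_coe, smul_eq_mul, Real.norm_eq_abs,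
    abs_of_nonneg (by positivity)]
  exact (T i).le_of_opNorm_le (norm_apply_le_norm ENNReal.top_ne_zero T i) (x i)

variable [Fact (1 ≤ p)]

noncomputable def blockDiagonal (T : lp (fun i => E i →L[𝕜] E i) ∞) : lp E p →L[𝕜] lp E p :=
  LinearMap.mkContinuous
    { toFun x := ⟨fun i => T i (x i), (lp.memℓp _).mono' (norm_apply_apply_le_smul_toNorm T x)⟩
      map_add' x y := lp.ext <| funext fun i => map_add (T i) (x i) (y i)
      map_smul' c x := lp.ext <| funext fun i => map_smul (T i) c (x i) }
    ‖T‖ fun x => by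
      refine (norm_mono (zero_lt_one.trans_le Fact.out).ne'
        (norm_apply_apply_le_smul_toNorm T x)).trans ?_
      rw [norm_smul, norm_norm, norm_toNorm]

theorem norm_blockDiagonal_le (T : lp (fun i => E i →L[𝕜] E i) ∞) :
    ‖(blockDiagonal T : lp E p →L[𝕜] lp E p)‖ ≤ ‖T‖ :=
  LinearMap.mkContinuous_norm_le _ (norm_nonneg T) _

variable (𝕜 E p) in
noncomputable def blockDiagonalCLM :
    lp (fun i => E i →L[𝕜] E i) ∞ →L[𝕜] (lp E p →L[𝕜] lp E p) :=
  LinearMap.mkContinuous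
    { toFun := blockDiagonal
      map_add' S T := rfl
      map_smul' c T := rfl }
    1 fun T => by
      rw [one_mul]
      exact norm_blockDiagonal_le T

variable [DecidableEq ι]

variable (p) in
noncomputable def diagonalBlock (T : lp E p →L[𝕜] lp E p) (i : ι) : E i →L[𝕜] E i :=
  evalCLM 𝕜 E p i ∘L T ∘L singleContinuousLinearMap 𝕜 E p i

theorem norm_diagonalBlock_le (T : lp E p →L[𝕜] lp E p) (i : ι) :
    ‖diagonalBlock p T i‖ ≤ ‖T‖ :=
  ContinuousLinearMap.opNorm_le_bound _ (norm_nonneg T) fun x => calc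
    ‖T (lp.single p i x) i‖ ≤ ‖T (lp.single p i x)‖ :=
      norm_apply_le_norm (zero_lt_one.trans_le Fact.out).ne' _ i
    _ ≤ ‖T‖ * ‖lp.single p i x‖ := T.le_opNorm _
    _ = ‖T‖ * ‖x‖ := by rw [lp.norm_single (zero_lt_one.trans_le Fact.out)]

variable (𝕜 E p) in
noncomputable def diagonalBlocksCLM :
    (lp E p →L[𝕜] lp E p) →L[𝕜] lp (fun i => E i →L[𝕜] E i) ∞ :=
  LinearMap.mkContinuous
    { toFun T := ⟨diagonalBlock p T, memℓp_infty ⟨‖T‖, by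
        rintro _ ⟨i, rfl⟩
        exact norm_diagonalBlock_le T i⟩⟩
      map_add' S T := rfl
      map_smul' c T := rfl }
    1 fun T => by
      rw [one_mul]
      exact norm_le_of_forall_le (norm_nonneg T) (norm_diagonalBlock_le T)

theorem diagonalBlocksCLM_blockDiagonalCLM (T : lp (fun i => E i →L[𝕜] E i) ∞) :
    diagonalBlocksCLM 𝕜 E p (blockDiagonalCLM 𝕜 E p T) = T :=
  lp.ext <| funext fun i => ContinuousLinearMap.ext fun x => by
    change T i (lp.single p i x i) = T i x
    rw [lp.single_apply_self]

end BlockDiagonal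

end lp

section Decomposition

variable {R X Y Z : Type*} [Semiring R] [AddCommMonoid X] [AddCommMonoid Y] [AddCommMonoid Z]
  [Module R X] [Module R Y] [Module R Z] [TopologicalSpace X] [TopologicalSpace Y]
  [TopologicalSpace Z]

def ContinuousLinearEquiv.pelczynskiDecomposition (eX : X ≃L[R] Y × Z) (eY : Y ≃L[R] Y × Y)
    (eY' : Y ≃L[R] Y × X) : X ≃L[R] Y :=
  eX.trans <| (eY.prodCongr (.refl R Z)).trans <| (prodAssoc R Y Y Z).trans <|
    ((ContinuousLinearEquiv.refl R Y).prodCongr eX.symm).trans eY'.symm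

end Decomposition

section LInftyNat

variable (𝕜 F : Type*) [NormedField 𝕜] [NormedAddCommGroup F] [NormedSpace 𝕜 F]

noncomputable def lpInftyNatEquivProdSelf :
    lp (fun _ : ℕ => F) ∞ ≃L[𝕜] lp (fun _ : ℕ => F) ∞ × lp (fun _ : ℕ => F) ∞ :=
  (lpCongrLeft 𝕜 F ∞ Equiv.natSumNatEquivNat.symm).toContinuousLinearEquiv.trans
    (lpInftySumEquiv 𝕜 F)

noncomputable def lpInftyNatEquivProd : lp (fun _ : ℕ => F) ∞ ≃L[𝕜] lp (fun _ : ℕ => F) ∞ × F :=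
  (lpCongrLeft 𝕜 F ∞ (Equiv.natSumPUnitEquivNat : ℕ ⊕ Unit ≃ ℕ).symm).toContinuousLinearEquiv.trans
    <| (lpInftySumEquiv 𝕜 F).trans <|
      (ContinuousLinearEquiv.refl 𝕜 _).prodCongr (lpUniqueEquiv 𝕜 F Unit ∞).toContinuousLinearEquiv

end LInftyNat

noncomputable def ContinuousLinearMap.equivLpInftyOfEquivLp {𝕜 E : Type*}
    [NontriviallyNormedField 𝕜] [NormedAddCommGroup E] [NormedSpace 𝕜 E] (p : ℝ≥0∞)
    [Fact (1 ≤ p)] (U : E ≃L[𝕜] lp (fun _ : ℕ => E) p) :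
    (E →L[𝕜] E) ≃L[𝕜] lp (fun _ : ℕ => E →L[𝕜] E) ∞ :=
  let V := U.arrowCongr U
  .pelczynskiDecomposition
    (.equivOfRightInverse ((lp.diagonalBlocksCLM 𝕜 _ p).comp (V : (E →L[𝕜] E) →L[𝕜] _))
      ((V.symm : _ →L[𝕜] E →L[𝕜] E).comp (lp.blockDiagonalCLM 𝕜 _ p)) fun T => by
        simp [lp.diagonalBlocksCLM_blockDiagonalCLM])
    (lpInftyNatEquivProdSelf 𝕜 _) (lpInftyNatEquivProd 𝕜 _)

noncomputable def lpNatEquivLpNatLp {𝕜 E : Type*} [NormedField 𝕜] [NormedAddCommGroup E]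
    [NormedSpace 𝕜 E] (p : ℝ≥0∞) [Fact (1 ≤ p)] (hp : p ≠ ∞) :
    lp (fun _ : ℕ => E) p ≃ₗᵢ[𝕜] lp (fun _ : ℕ => lp (fun _ : ℕ => E) p) p :=
  (lpCongrLeft 𝕜 E p Nat.pairEquiv.symm).trans (lpCurry 𝕜 E p hp)

/-- `B(ℓ₂)` is isomorphic, via a continuous linear equivalence, to the Banach
space `ℓ∞(B(ℓ₂))` of bounded `B(ℓ₂)`-valued sequences with the sup norm. -/
theorem boundedOps_equiv_linfty_boundedOps :
    Nonempty (BoundedOpsOnEllTwo ≃L[ℂ] lp (fun _ : ℕ => BoundedOpsOnEllTwo) ∞) :=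
  ⟨ContinuousLinearMap.equivLpInftyOfEquivLp 2
    (lpNatEquivLpNatLp 2 ENNReal.ofNat_ne_top).toContinuousLinearEquiv⟩
end
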